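/- arXiv:2302.14518 — 3 statements merged into one kernel-verified Lean document; each statement's English description precedes it below -/
import Mathlib

section
/- Closed form of the exterior L∞ integral: Let R > 0 and let f₀ : ℝ → ℝ be a probability density function that is symmetric around 0 and non-increasing on [0, ∞). Then for every d ∈ ℕ, d ≥ 1, ∫_{{w ∈ ℝ^d : ‖w‖_∞ > R}} ∏_{i=1}^d ( sup_{x_i: |x_i| ≤ R} f₀(w_i − x_i) ) dw = (1 + 2R f₀(0))^d − (2R f₀(0))^d. -/
open MeasureTheory Set

/-!
Since `f₀` is even and non-increasing in `|t|`, the supremum of `f₀ (w - x)` over `x ∈ [-R, R]`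
is attained at the point of `[-R, R]` nearest to `w`, so it equals `f₀ (max (|w| - R) 0)`: the
density cut at `0`, its halves pushed apart to `±R`, and the gap filled by a plateau of height
`f₀ 0`. This one-dimensional function has integral `1 + 2 R f₀ 0`, and `2 R f₀ 0` over `[-R, R]`.
The integrand is its tensor power, so by Fubini the integral over `ℝ^d` is `(1 + 2 R f₀ 0) ^ d`,
over the cube `[-R, R]^d` (the closed sup-norm ball) it is `(2 R f₀ 0) ^ d`, and the exterior
integral is the difference.
-/

theorem Function.Even.apply_abs {f : ℝ → ℝ} (hf : Function.Even f) (x : ℝ) : f |x| = f x := by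
  rcases abs_choice x with h | h <;> rw [h]
  exact hf x

theorem Function.Even.apply_le_apply_of_abs_le {f : ℝ → ℝ} (hf : Function.Even f)
    (hmono : AntitoneOn f (Ici 0)) {a b : ℝ} (h : |a| ≤ |b|) : f b ≤ f a := by
  rw [← hf.apply_abs a, ← hf.apply_abs b]
  exact hmono (abs_nonneg a) (abs_nonneg b) h

-- `0 ≤ M` is needed because the inner supremum over `x ∉ s` is `sSup ∅ = 0` in `ℝ`.
theorem Real.biSup_eq_of_isGreatest {ι : Type*} {s : Set ι} {g : ι → ℝ} {M : ℝ}
    (hM : IsGreatest (g '' s) M) (h0 : 0 ≤ M) : ⨆ x ∈ s, g x = M := by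
  have hsup : ⨆ x : s, g x = M := by rw [iSup, ← image_eq_range, hM.csSup_eq]
  rw [← csSup_image (by rw [← image_eq_range]; exact hM.bddAbove) (by simpa [hsup] using h0),
    hM.csSup_eq]

theorem abs_sub_max_min_eq (R w : ℝ) (hR : 0 ≤ R) :
    |w - max (-R) (min R w)| = max (|w| - R) 0 := by
  simp only [abs_eq_max_neg]
  grind

def plateau (f : ℝ → ℝ) (R w : ℝ) : ℝ := f (max (|w| - R) 0)

variable {f : ℝ → ℝ} {R : ℝ}

theorem iSup_Icc_apply_sub_eq_plateau (h0 : ∀ x, 0 ≤ f x) (hf : Function.Even f)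
    (hmono : AntitoneOn f (Ici 0)) (hR : 0 ≤ R) (w : ℝ) :
    ⨆ x ∈ Icc (-R) R, f (w - x) = plateau f R w := by
  refine Real.biSup_eq_of_isGreatest ⟨⟨max (-R) (min R w), ?_, ?_⟩, ?_⟩ (h0 _)
  · exact ⟨le_max_left _ _, max_le (by linarith) (min_le_left _ _)⟩
  · rw [plateau, ← abs_sub_max_min_eq R w hR, hf.apply_abs]
  · rintro _ ⟨x, hx, rfl⟩
    refine hf.apply_le_apply_of_abs_le hmono ?_
    rw [abs_of_nonneg (le_max_right _ _)]
    have hxR : |x| ≤ R := abs_le.mpr hx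
    exact max_le (by linarith [abs_sub_abs_le_abs_sub w x]) (abs_nonneg _)

theorem plateau_of_abs_le {w : ℝ} (hw : |w| ≤ R) : plateau f R w = f 0 := by
  rw [plateau, max_eq_right (by linarith)]

-- The pieces are half-open so that they do not overlap at `w = ±R`.
theorem plateau_eq_indicator_add (hf : Function.Even f) (hR : 0 ≤ R) (w : ℝ) :
    plateau f R w = (Iio 0).indicator f (w + R) + (Ico (-R) R).indicator (fun _ ↦ f 0) w
      + (Ici 0).indicator f (w - R) := by
  simp only [plateau, indicator_apply, mem_Iio, mem_Ico, mem_Ici]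
  rcases lt_or_ge w (-R) with hw | hw
  · rw [if_pos (by linarith), if_neg (by intro h; linarith [h.1]), if_neg (by linarith),
      abs_of_neg (by linarith), max_eq_left (by linarith), ← hf]
    ring_nf
  · rcases lt_or_ge w R with hw' | hw'
    · rw [if_neg (by linarith), if_pos ⟨hw, hw'⟩, if_neg (by linarith),
        max_eq_right (by linarith [abs_le.mpr ⟨hw, hw'.le⟩])]
      ring
    · rw [if_neg (by linarith), if_neg (by intro h; linarith [h.2]), if_pos (by linarith),
        abs_of_nonneg (by linarith), max_eq_left (by linarith)]
      ring

theorem integrable_plateau (hf : Function.Even f) (hR : 0 ≤ R) (hfi : Integrable f) :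
    Integrable (plateau f R) := by
  rw [funext (plateau_eq_indicator_add hf hR)]
  refine (((hfi.indicator measurableSet_Iio).comp_add_right R).add ?_).add
    ((hfi.indicator measurableSet_Ici).comp_sub_right R)
  exact (integrableOn_const (by simp [Real.volume_Ico])).integrable_indicator measurableSet_Ico

theorem integral_plateau (hf : Function.Even f) (hR : 0 ≤ R) (hfi : Integrable f) :
    ∫ w, plateau f R w = (∫ x, f x) + 2 * R * f 0 := by
  have hconst : Integrable ((Ico (-R) R).indicator fun _ ↦ f 0) :=
    (integrableOn_const (by simp [Real.volume_Ico])).integrable_indicator measurableSet_Ico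
  have hleft := (hfi.indicator (measurableSet_Iio (a := 0))).comp_add_right R
  have hright := (hfi.indicator (measurableSet_Ici (a := 0))).comp_sub_right R
  have hhalves : (∫ x, (Iio 0).indicator f x) + ∫ x, (Ici 0).indicator f x = ∫ x, f x := by
    rw [← integral_add (hfi.indicator measurableSet_Iio) (hfi.indicator measurableSet_Ici),
      ← compl_Iio, ← Pi.add_def, indicator_self_add_compl]
  simp only [plateau_eq_indicator_add hf hR]
  rw [integral_add (f := fun w ↦ (Iio 0).indicator f (w + R) + (Ico (-R) R).indicator _ w)
      (hleft.add hconst) hright, integral_add hleft hconst,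
    integral_add_right_eq_self (fun x ↦ (Iio 0).indicator f x),
    integral_sub_right_eq_self (fun x ↦ (Ici 0).indicator f x),
    integral_indicator measurableSet_Ico, setIntegral_const, measureReal_def, Real.volume_Ico,
    ENNReal.toReal_ofReal (by linarith), smul_eq_mul, ← hhalves]
  ring

theorem setIntegral_Icc_plateau (hR : 0 ≤ R) :
    ∫ w in Icc (-R) R, plateau f R w = 2 * R * f 0 := by
  rw [setIntegral_congr_fun measurableSet_Icc fun w hw ↦ plateau_of_abs_le (abs_le.mpr hw),
    setIntegral_const, measureReal_def, Real.volume_Icc, ENNReal.toReal_ofReal (by linarith),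
    smul_eq_mul]
  ring

theorem setIntegral_norm_gt_prod {ι : Type*} [Fintype ι] {g : ℝ → ℝ} (hg : Integrable g)
    (hR : 0 ≤ R) :
    ∫ w in {w : ι → ℝ | R < ‖w‖}, ∏ i, g (w i)
      = (∫ x, g x) ^ Fintype.card ι - (∫ x in Icc (-R) R, g x) ^ Fintype.card ι := by
  have hball : Metric.closedBall (0 : ι → ℝ) R = univ.pi fun _ ↦ Icc (-R) R := by
    simp [closedBall_pi _ hR, Real.closedBall_eq_Icc]
  have hcompl : {w : ι → ℝ | R < ‖w‖} = (Metric.closedBall 0 R)ᶜ := by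
    ext w; simp
  have hprod : Integrable (fun w : ι → ℝ ↦ ∏ i, g (w i)) := Integrable.fintype_prod fun _ ↦ hg
  rw [hcompl, setIntegral_compl Metric.isClosed_closedBall.measurableSet hprod, hball,
    volume_pi, Measure.restrict_pi_pi, integral_fintype_prod_eq_pow, integral_fintype_prod_eq_pow]

theorem exterior_Linf_integral_closed_form_general
    (R : ℝ) (hR : 0 < R)
    (f0 : ℝ → ℝ)
    (h_nonneg : ∀ x, 0 ≤ f0 x)
    (h_int : ∫ x, f0 x = 1)
    (h_symm : ∀ x, f0 (-x) = f0 x)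
    (h_mono : ∀ x y, 0 ≤ x → x ≤ y → f0 y ≤ f0 x)
    (d : ℕ) :
    (∫ w in {w : Fin d → ℝ | R < ‖w‖},
        ∏ i, ⨆ x ∈ Set.Icc (-R) R, f0 (w i - x))
      = (1 + 2 * R * f0 0) ^ d - (2 * R * f0 0) ^ d := by
  have hfi : Integrable f0 := .of_integral_ne_zero (by simp [h_int])
  have hmono : AntitoneOn f0 (Ici 0) := fun x hx y _ hxy ↦ h_mono x y hx hxy
  simp only [iSup_Icc_apply_sub_eq_plateau h_nonneg h_symm hmono hR.le]
  rw [setIntegral_norm_gt_prod (integrable_plateau h_symm hR.le hfi) hR.le,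
    integral_plateau h_symm hR.le hfi, setIntegral_Icc_plateau hR.le, h_int, Fintype.card_fin]

/-- Closed form of the exterior `L∞` integral:
`∫_{‖w‖_∞ > R} ∏_i (sup_{|x_i| ≤ R} f₀(w_i - x_i)) dw = (1 + 2R f₀(0))^d - (2R f₀(0))^d`.
(The norm on `Fin d → ℝ` is the sup norm.) -/
theorem exterior_Linf_integral_closed_form
    (R : ℝ) (hR : 0 < R)
    (f0 : ℝ → ℝ)
    (h_nonneg : ∀ x, 0 ≤ f0 x) (h_meas : Measurable f0)
    (h_int : ∫ x, f0 x = 1)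
    (h_symm : ∀ x, f0 (-x) = f0 x)
    (h_mono : ∀ x y, 0 ≤ x → x ≤ y → f0 y ≤ f0 x)
    (d : ℕ) (hd : 1 ≤ d) :
    (∫ w in {w : Fin d → ℝ | R < ‖w‖},
        ∏ i, ⨆ x ∈ Set.Icc (-R) R, f0 (w i - x))
      = (1 + 2 * R * f0 0) ^ d - (2 * R * f0 0) ^ d :=
  exterior_Linf_integral_closed_form_general R hR f0 h_nonneg h_int h_symm h_mono d
end

section
/- Per-iteration identity for Laplace noise under L₁-bounded updates (core of Theorem 5): Let d ∈ ℕ, d ≥ 1, λ > 0, R > 0, and let f(w) = (λ/2)^d exp(−λ‖w‖₁). Then ∫_{ℝ^d} sup_{x: ‖x‖₁ ≤ R} f(w − x) dw = (λR)^d/d! + ∑_{i=0}^{d−1} (λR)^i / i!. (The first term equals f(0)·V₁(d,R) where V₁(d,R) = (2R)^d/d! is the volume of the L₁-ball of radius R.) -/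
/-!
The supremum of `f (w - x)` over the ball is attained at the point of the ball nearest to `w`,
so the integrand is the radial profile `(λ/2)^d exp(-λ max(‖w‖₁ - R, 0))`. In `ℓ¹`-polar
coordinates (the `ℓ¹` unit ball has volume `2^d/d!`) the integral becomes a multiple of
`∫₀^∞ y^(d-1) exp(-λ max(y - R, 0)) dy`. Its part over `[0, R]` yields the volume term
`(λR)^d/d!`; on the tail, shifting by `R` and expanding `(R + x)^(d-1)` binomially leaves Gamma
integrals `∫₀^∞ x^j e^(-λx) dx = j!/λ^(j+1)`, which sum to `∑_{i<d} (λR)^i/i!`.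
-/

open MeasureTheory Set Real Finset Metric
open scoped Nat

section NormedSpace
variable {E : Type*} [NormedAddCommGroup E] [NormedSpace ℝ E]

theorem exists_mem_closedBall_norm_sub_eq {R : ℝ} (hR : 0 ≤ R) (w : E) :
    ∃ x ∈ closedBall (0 : E) R, ‖w - x‖ = max (‖w‖ - R) 0 := by
  rcases le_or_gt ‖w‖ R with hw | hw
  · exact ⟨w, by simpa using hw, by simp [hw]⟩
  · have hw0 : 0 < ‖w‖ := hR.trans_lt hw
    refine ⟨(R / ‖w‖) • w, ?_, ?_⟩
    · simp [norm_smul, abs_of_nonneg hR, hw0.ne']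
    · rw [show w - (R / ‖w‖) • w = (1 - R / ‖w‖) • w by module, norm_smul,
        Real.norm_eq_abs, abs_of_nonneg (sub_nonneg.mpr ((div_le_one hw0).mpr hw.le)),
        max_eq_left (by linarith)]
      field_simp

theorem iSup_closedBall_comp_norm_sub {h : ℝ → ℝ} (h_anti : AntitoneOn h (Ici 0))
    (h_nonneg : ∀ t, 0 ≤ h t) {R : ℝ} (hR : 0 ≤ R) (w : E) :
    ⨆ x ∈ closedBall (0 : E) R, h ‖w - x‖ = h (max (‖w‖ - R) 0) := by
  have hle (x : E) (hx : x ∈ closedBall 0 R) : h ‖w - x‖ ≤ h (max (‖w‖ - R) 0) :=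
    h_anti (mem_Ici.mpr (le_max_right _ _)) (mem_Ici.mpr (norm_nonneg _)) <| max_le (by
      have := norm_sub_norm_le w x
      rw [mem_closedBall_zero_iff] at hx
      linarith) (norm_nonneg _)
  refine le_antisymm (Real.iSup_le (fun x => Real.iSup_le (hle x) (h_nonneg _)) (h_nonneg _)) ?_
  obtain ⟨x₀, hx₀, hnorm⟩ := exists_mem_closedBall_norm_sub_eq hR w
  have hbdd : BddAbove (range fun x => ⨆ _ : x ∈ closedBall (0 : E) R, h ‖w - x‖) :=
    ⟨h 0, forall_mem_range.mpr fun x => Real.iSup_le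
      (fun _ => h_anti self_mem_Ici (mem_Ici.mpr (norm_nonneg _)) (norm_nonneg _)) (h_nonneg 0)⟩
  refine le_ciSup_of_le hbdd x₀ ?_
  rw [ciSup_pos hx₀, hnorm]

end NormedSpace

theorem iSup_sum_abs_le_comp_sum_abs_sub {ι : Type*} [Fintype ι] {h : ℝ → ℝ}
    (h_anti : AntitoneOn h (Ici 0)) (h_nonneg : ∀ t, 0 ≤ h t) {R : ℝ} (hR : 0 ≤ R)
    (w : ι → ℝ) :
    ⨆ x ∈ {x : ι → ℝ | ∑ i, |x i| ≤ R}, h (∑ i, |(w - x) i|) =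
      h (max (∑ i, |w i| - R) 0) := by
  have := iSup_closedBall_comp_norm_sub h_anti h_nonneg hR (WithLp.toLp 1 w)
  rw [← (WithLp.equiv 1 (ι → ℝ)).symm.iSup_comp] at this
  simpa [PiLp.norm_eq_of_L1] using this

theorem volume_sum_abs_lt_one (ι : Type*) [Fintype ι] :
    volume {w : ι → ℝ | ∑ i, |w i| < 1} =
      .ofReal (2 ^ Fintype.card ι / (Fintype.card ι)!) := by
  have h := volume_sum_rpow_lt_one ι (p := 1) le_rfl
  simp only [Real.rpow_one, div_one] at h
  rw [h, ← Real.Gamma_nat_eq_factorial, one_add_one_eq_two, Real.Gamma_two, mul_one]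

/-- `PiLp 1` carries the `ℓ¹` norm, so the polar-coordinate formula for Haar measures applies to
the image of Lebesgue measure there. -/
theorem integral_comp_sum_abs {ι : Type*} [Fintype ι] [Nonempty ι] (F : ℝ → ℝ) :
    ∫ w : ι → ℝ, F (∑ i, |w i|) =
      Fintype.card ι * (2 ^ Fintype.card ι / (Fintype.card ι)!) *
        ∫ y in Ioi 0, y ^ (Fintype.card ι - 1) * F y := by
  let e := MeasurableEquiv.toLp 1 (ι → ℝ)
  have : (volume.map e).IsAddHaarMeasure :=
    (PiLp.continuousLinearEquiv 1 ℝ fun _ : ι => ℝ).symm.isAddHaarMeasure_map volume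
  have hdim : Module.finrank ℝ (PiLp 1 fun _ : ι => ℝ) = Fintype.card ι := by
    rw [(WithLp.linearEquiv 1 ℝ (ι → ℝ)).finrank_eq, Module.finrank_pi]
  have hball : (volume.map e).real (Metric.ball 0 1) =
      2 ^ Fintype.card ι / (Fintype.card ι)! := by
    have hpre : e ⁻¹' Metric.ball 0 1 = {w : ι → ℝ | ∑ i, |w i| < 1} := by
      ext w; simp [e, PiLp.norm_eq_of_L1]
    rw [measureReal_def, e.map_apply, hpre, volume_sum_abs_lt_one,
      ENNReal.toReal_ofReal (by positivity)]
  have := integral_fun_norm_addHaar (volume.map e) F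
  rw [hdim, hball, integral_map_equiv] at this
  simpa [e, PiLp.norm_eq_of_L1, smul_eq_mul, mul_assoc] using this

theorem integral_Ioi_pow_mul_exp_neg_mul (k : ℕ) {b : ℝ} (hb : 0 < b) :
    ∫ x in Ioi (0 : ℝ), x ^ k * exp (-(b * x)) = k ! / b ^ (k + 1) := by
  have h := integral_rpow_mul_exp_neg_mul_Ioi (a := k + 1) (by positivity) hb
  rw [add_sub_cancel_right, Gamma_nat_eq_factorial, ← Nat.cast_add_one, rpow_natCast,
    one_div, inv_pow] at h
  simpa only [rpow_natCast, div_eq_inv_mul] using h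

theorem integrableOn_Ioi_pow_mul_exp_neg_mul (k : ℕ) {b : ℝ} (hb : 0 < b) :
    IntegrableOn (fun x => x ^ k * exp (-(b * x))) (Ioi 0) :=
  Integrable.of_integral_ne_zero <| by
    rw [integral_Ioi_pow_mul_exp_neg_mul k hb]; positivity

theorem integral_Ioi_add_pow_mul_exp_neg_mul (k : ℕ) (a : ℝ) {b : ℝ} (hb : 0 < b) :
    ∫ x in Ioi (0 : ℝ), (a + x) ^ k * exp (-(b * x)) =
      ∑ i ∈ range (k + 1), k ! / i ! * a ^ i / b ^ (k + 1 - i) := by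
  have hexpand : ∀ x, (a + x) ^ k * exp (-(b * x)) =
      ∑ i ∈ range (k + 1), a ^ i * k.choose i * (x ^ (k - i) * exp (-(b * x))) := by
    intro x
    rw [add_pow, sum_mul]
    exact sum_congr rfl fun i _ => by ring
  simp_rw [hexpand]
  rw [integral_finsetSum _ fun i _ => (integrableOn_Ioi_pow_mul_exp_neg_mul _ hb).const_mul _]
  refine sum_congr rfl fun i hi => ?_
  have hik : i ≤ k := Nat.lt_succ_iff.mp (mem_range.mp hi)
  rw [integral_const_mul, integral_Ioi_pow_mul_exp_neg_mul _ hb, Nat.sub_add_comm hik,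
    ← Nat.choose_mul_factorial_mul_factorial hik]
  push_cast
  field_simp

theorem integral_Ioi_pow_mul_exp_neg_mul_max_sub (k : ℕ) {b R : ℝ} (hb : 0 < b) (hR : 0 ≤ R) :
    ∫ y in Ioi (0 : ℝ), y ^ k * exp (-(b * max (y - R) 0)) =
      R ^ (k + 1) / (k + 1) + ∑ i ∈ range (k + 1), k ! / i ! * R ^ i / b ^ (k + 1 - i) := by
  set g := fun y : ℝ => y ^ k * exp (-(b * max (y - R) 0))
  have hball : ∫ y in Ioc 0 R, g y = R ^ (k + 1) / (k + 1) := by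
    have hflat : EqOn g (fun y => y ^ k) (Ioc 0 R) := fun y hy => by
      simp [g, max_eq_right (sub_nonpos.mpr hy.2)]
    rw [setIntegral_congr_fun measurableSet_Ioc hflat, ← intervalIntegral.integral_of_le hR,
      integral_pow]
    simp
  have htail :
      ∫ y in Ioi R, g y = ∑ i ∈ range (k + 1), k ! / i ! * R ^ i / b ^ (k + 1 - i) := by
    rw [← integral_Ioi_add_pow_mul_exp_neg_mul k R hb,
      ← (measurePreserving_add_right volume R).setIntegral_preimage_emb
        (measurableEmbedding_addRight R), preimage_add_const_Ioi, sub_self]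
    refine setIntegral_congr_fun measurableSet_Ioi fun x (hx : 0 < x) => ?_
    simp [g, add_comm x, max_eq_left hx.le]
  have htail_int : IntegrableOn g (Ioi R) := Integrable.of_integral_ne_zero <| by
    rw [htail]
    exact (sum_pos' (fun i _ => by positivity) ⟨0, by simp, by positivity⟩).ne'
  have hball_int : IntegrableOn g (Ioc 0 R) :=
    (by fun_prop : Continuous g).integrableOn_Ioc
  rw [← Ioc_union_Ioi_eq_Ioi hR, setIntegral_union (Ioc_disjoint_Ioi le_rfl) measurableSet_Ioi
    hball_int htail_int, hball, htail]

theorem integral_laplace_sup_profile (k : ℕ) {lam R : ℝ} (hlam : 0 < lam) (hR : 0 ≤ R) :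
    ∫ w : Fin (k + 1) → ℝ, (lam / 2) ^ (k + 1) * exp (-(lam * max (∑ i, |w i| - R) 0)) =
      (lam * R) ^ (k + 1) / (k + 1)! + ∑ i ∈ range (k + 1), (lam * R) ^ i / i ! := by
  have := integral_comp_sum_abs (ι := Fin (k + 1))
    fun y => (lam / 2) ^ (k + 1) * exp (-(lam * max (y - R) 0))
  simp only [Fintype.card_fin, add_tsub_cancel_right, mul_left_comm _ ((lam / 2) ^ (k + 1)),
    integral_const_mul, integral_Ioi_pow_mul_exp_neg_mul_max_sub k hlam hR] at this
  have hscale : (lam / 2) ^ (k + 1) * ((k + 1 : ℕ) * (2 ^ (k + 1) / ((k + 1)! : ℝ)))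
      = lam ^ (k + 1) / k ! := by
    rw [Nat.factorial_succ]; push_cast; field_simp
    rw [← mul_pow, div_mul_cancel₀ _ two_ne_zero]
  rw [integral_const_mul, this, ← mul_assoc, hscale, mul_add, mul_sum]
  congr 1
  · rw [Nat.factorial_succ]; push_cast; field_simp; ring
  · refine sum_congr rfl fun i hi => ?_
    obtain ⟨j, rfl⟩ := Nat.exists_eq_add_of_le (Nat.lt_succ_iff.mp (mem_range.mp hi))
    rw [show i + j + 1 - i = j + 1 by omega]
    field_simp
    ring

/-- Per-iteration identity for Laplace noise under `L₁`-bounded updates (core of Theorem 5):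
`∫_{ℝ^d} sup_{‖x‖₁ ≤ R} f(w - x) dw = (λR)^d/d! + ∑_{i=0}^{d-1} (λR)^i / i!`,
where `f(w) = (λ/2)^d exp(-λ‖w‖₁)`. The first term equals `f(0)·V₁(d,R)` with
`V₁(d,R) = (2R)^d/d!` the volume of the `L₁`-ball of radius `R`. -/
theorem laplace_sliding_sup_integral
    (d : ℕ) (hd : 1 ≤ d) (lam R : ℝ) (hlam : 0 < lam) (hR : 0 < R)
    (f : (Fin d → ℝ) → ℝ)
    (hf : ∀ w, f w = (lam / 2) ^ d * Real.exp (-lam * ∑ i, |w i|)) :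
    (∫ w : Fin d → ℝ, ⨆ x ∈ {x : Fin d → ℝ | ∑ i, |x i| ≤ R}, f (w - x))
      = (lam * R) ^ d / (d.factorial : ℝ)
        + ∑ i ∈ Finset.range d, (lam * R) ^ i / (i.factorial : ℝ) := by
  obtain ⟨k, rfl⟩ : ∃ k, d = k + 1 := ⟨d - 1, by omega⟩
  have h_anti : AntitoneOn (fun t => (lam / 2) ^ (k + 1) * exp (-(lam * t))) (Ici 0) :=
    fun s _ t _ hst => by dsimp only; gcongr
  have hsup (w : Fin (k + 1) → ℝ) :
      ⨆ x ∈ {x : Fin (k + 1) → ℝ | ∑ i, |x i| ≤ R}, f (w - x) =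
        (lam / 2) ^ (k + 1) * exp (-(lam * max (∑ i, |w i| - R) 0)) := by
    simp_rw [hf, neg_mul]
    exact iSup_sum_abs_le_comp_sum_abs_sub h_anti (fun t => by positivity) hR.le w
  simp_rw [hsup]
  exact integral_laplace_sup_profile k hlam hR.le
end

section
/- Gaussian integral over the exterior of the simplex in the positive octant: Let d ∈ ℕ, d ≥ 1, and σ, R > 0. Then ∫_{{w ∈ ℝ^d : w_i ≥ 0 ∀i, ∑_{i=1}^d w_i ≥ R}} (2πσ²)^{−d/2} exp( −(∑_{i=1}^d w_i − R)² / (2dσ²) ) dw = (1/(2 (2πσ²)^{d/2} (d−1)!)) ∑_{i=0}^{d−1} binom(d−1, i) R^{d−1−i} (σ√(2d))^{i+1} Γ((i+1)/2). -/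
/-!
The integrand depends on `w` only through `s = ∑ i, w i`, and the push-forward of Lebesgue
measure on the positive octant of `ℝ^(n+1)` under this sum has density `s ^ n / n !` on
`(0, ∞)`: induct on `n`, the step being a convolution with Lebesgue measure on `(0, ∞)`.
Substituting `s = R + t` and expanding `(R + t) ^ n` binomially leaves the half-line Gaussian
moments `∫₀^∞ t ^ i * exp (-t² / a²) dt = a ^ (i + 1) * Γ((i + 1) / 2) / 2`, with `a = σ √(2d)`.
-/

open MeasureTheory Set Real
open scoped ENNReal Nat

theorem integral_Ioi_pow_mul_exp_neg_sq_div_sq (i : ℕ) {a : ℝ} (ha : 0 < a) :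
    ∫ t in Ioi (0 : ℝ), t ^ i * exp (-t ^ 2 / a ^ 2) = a ^ (i + 1) * Gamma ((i + 1) / 2) / 2 := by
  have hpow : ((a ^ 2)⁻¹) ^ (-((i : ℝ) + 1) / 2) = a ^ (i + 1) := by
    rw [inv_rpow (by positivity), ← rpow_neg (by positivity), neg_div, neg_neg, ← rpow_natCast a 2,
      ← rpow_mul ha.le, show ((2 : ℕ) : ℝ) * ((i + 1) / 2) = ((i + 1 : ℕ) : ℝ) by push_cast; ring,
      rpow_natCast]
  have h := integral_rpow_mul_exp_neg_mul_rpow two_pos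
    (by linarith [i.cast_nonneg (α := ℝ)] : (-1 : ℝ) < i) (inv_pos.2 (pow_pos ha 2))
  rw [hpow] at h
  rw [show a ^ (i + 1) * Gamma ((i + 1) / 2) / 2 = a ^ (i + 1) * (1 / 2) * Gamma ((i + 1) / 2) by
    ring, ← h]
  refine setIntegral_congr_fun measurableSet_Ioi fun t _ => ?_
  simp only [rpow_natCast, rpow_two, div_eq_inv_mul, neg_mul, mul_neg]

theorem integral_Ioi_pow_mul_exp_neg_sq_sub_div_sq (n : ℕ) (R : ℝ) {a : ℝ} (ha : 0 < a) :
    ∫ s in Ioi R, s ^ n * exp (-(s - R) ^ 2 / a ^ 2) =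
      ∑ i ∈ Finset.range (n + 1),
        n.choose i * R ^ (n - i) * (a ^ (i + 1) * Gamma ((i + 1) / 2) / 2) := by
  have hint (i : ℕ) : IntegrableOn (fun t : ℝ => t ^ i * exp (-t ^ 2 / a ^ 2)) (Ioi 0) := by
    have := integrableOn_rpow_mul_exp_neg_mul_sq (inv_pos.2 (pow_pos ha 2))
      (by linarith [i.cast_nonneg (α := ℝ)] : (-1 : ℝ) < i)
    simpa only [rpow_natCast, div_eq_inv_mul, neg_mul, mul_neg] using this
  calc ∫ s in Ioi R, s ^ n * exp (-(s - R) ^ 2 / a ^ 2)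
      = ∫ t in Ioi 0, (t + R) ^ n * exp (-t ^ 2 / a ^ 2) := by
        rw [← (measurePreserving_add_right volume R).setIntegral_preimage_emb
          (MeasurableEquiv.addRight R).measurableEmbedding, preimage_add_const_Ioi, sub_self]
        simp only [add_sub_cancel_right]
    _ = ∫ t in Ioi 0, ∑ i ∈ Finset.range (n + 1),
          n.choose i * R ^ (n - i) * (t ^ i * exp (-t ^ 2 / a ^ 2)) := by
        refine setIntegral_congr_fun measurableSet_Ioi fun t _ => ?_
        rw [add_pow, Finset.sum_mul]
        exact Finset.sum_congr rfl fun i _ => by ring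
    _ = _ := by
        rw [integral_finsetSum _ fun i _ => (hint i).const_mul _]
        simp only [integral_const_mul, integral_Ioi_pow_mul_exp_neg_sq_div_sq _ ha]

theorem lintegral_Ioi_comp_add_right (f : ℝ → ℝ≥0∞) (s : ℝ) :
    ∫⁻ x in Ioi 0, f (x + s) = ∫⁻ u in Ioi s, f u := by
  have := (measurePreserving_add_right volume s).setLIntegral_comp_preimage_emb
    (MeasurableEquiv.addRight s).measurableEmbedding f (Ioi s)
  rwa [preimage_add_const_Ioi, sub_self] at this

theorem lintegral_Ioi_lintegral_Ioi_mul_comp_add {g f : ℝ → ℝ≥0∞} (hg : Measurable g)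
    (hf : Measurable f) :
    ∫⁻ x in Ioi 0, ∫⁻ s in Ioi 0, g s * f (x + s) =
      ∫⁻ u in Ioi 0, (∫⁻ s in Ioo 0 u, g s) * f u := by
  have hmeas : Measurable fun p : ℝ × ℝ => g p.1 * (Ioi p.1).indicator f p.2 := by
    simp only [indicator_apply, mem_Ioi]
    exact hg.comp measurable_fst |>.mul <|
      Measurable.ite (measurableSet_lt measurable_fst measurable_snd) (hf.comp measurable_snd)
        measurable_const
  calc ∫⁻ x in Ioi 0, ∫⁻ s in Ioi 0, g s * f (x + s)
      = ∫⁻ s in Ioi 0, ∫⁻ x in Ioi 0, g s * f (x + s) :=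
        lintegral_lintegral_swap ((hg.comp measurable_snd).mul
          (hf.comp (measurable_fst.add measurable_snd))).aemeasurable
    _ = ∫⁻ s in Ioi 0, ∫⁻ u in Ioi 0, g s * (Ioi s).indicator f u := by
        refine setLIntegral_congr_fun measurableSet_Ioi fun s hs => ?_
        rw [lintegral_const_mul _ (by fun_prop : Measurable fun x => f (x + s)),
          lintegral_const_mul _ (hf.indicator measurableSet_Ioi),
          lintegral_indicator measurableSet_Ioi, Measure.restrict_restrict measurableSet_Ioi,
          Ioi_inter_Ioi, sup_eq_left.2 (le_of_lt hs), lintegral_Ioi_comp_add_right]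
    _ = ∫⁻ u in Ioi 0, ∫⁻ s in Ioi 0, g s * (Ioi s).indicator f u :=
        lintegral_lintegral_swap hmeas.aemeasurable
    _ = ∫⁻ u in Ioi 0, (∫⁻ s in Ioo 0 u, g s) * f u := by
        refine lintegral_congr fun u => ?_
        rw [← lintegral_mul_const _ hg, ← Ioi_inter_Iio, inter_comm,
          ← Measure.restrict_restrict measurableSet_Iio,
          ← lintegral_indicator measurableSet_Iio]
        refine lintegral_congr fun s => ?_
        by_cases hsu : s < u <;> simp [hsu]

theorem lintegral_Ioo_pow_div_factorial (n : ℕ) {u : ℝ} (hu : 0 ≤ u) :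
    ∫⁻ s in Ioo 0 u, ENNReal.ofReal (s ^ n / n !) = ENNReal.ofReal (u ^ (n + 1) / (n + 1)!) := by
  have hcont : Continuous fun s : ℝ => s ^ n / n ! := by fun_prop
  rw [← ofReal_integral_eq_lintegral_ofReal
      (hcont.integrableOn_Icc.mono_set Ioo_subset_Icc_self)
      (ae_restrict_of_forall_mem measurableSet_Ioo fun s hs => by have := hs.1.le; positivity),
    ← integral_Ioc_eq_integral_Ioo, ← intervalIntegral.integral_of_le hu,
    intervalIntegral.integral_div, integral_pow, Nat.factorial_succ]
  congr 1
  simp [field]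

theorem lintegral_Ici_zero_fin_succ (n : ℕ) {F : (Fin (n + 1) → ℝ) → ℝ≥0∞} (hF : Measurable F) :
    ∫⁻ w in Ici 0, F w = ∫⁻ x in Ici 0, ∫⁻ y in Ici 0, F (Fin.cons x y) := by
  let e := (MeasurableEquiv.piFinSuccAbove (fun _ : Fin (n + 1) => ℝ) 0).symm
  have he (p : ℝ × (Fin n → ℝ)) : e p = Fin.cons p.1 p.2 := by
    simp [e, MeasurableEquiv.piFinSuccAbove_symm_apply]
    rfl
  have hpre : e ⁻¹' Ici 0 = Ici 0 ×ˢ Ici 0 := by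
    ext p
    simp only [mem_preimage, he, mem_prod, mem_Ici, Fin.le_cons]
    rfl
  rw [← ((volume_preserving_piFinSuccAbove _ 0).symm _).setLIntegral_comp_preimage_emb
    e.measurableEmbedding, hpre, Measure.volume_eq_prod, ← Measure.prod_restrict,
    lintegral_prod (fun p => F (e p)) (hF.comp e.measurable).aemeasurable]
  simp only [he]

theorem lintegral_Ici_zero_comp_sum (n : ℕ) {f : ℝ → ℝ≥0∞} (hf : Measurable f) :
    ∫⁻ w in Ici (0 : Fin (n + 1) → ℝ), f (∑ i, w i) =
      ∫⁻ s in Ioi 0, ENNReal.ofReal (s ^ n / n !) * f s := by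
  induction n generalizing f with
  | zero =>
    rw [lintegral_Ici_zero_fin_succ 0 (by fun_prop), Measure.restrict_congr_set Ioi_ae_eq_Ici.symm]
    simp [Measure.volume_pi_eq_dirac (0 : Fin 0 → ℝ)]
  | succ n ih =>
    rw [lintegral_Ici_zero_fin_succ _ (by fun_prop), Measure.restrict_congr_set Ioi_ae_eq_Ici.symm]
    have inner (x : ℝ) : ∫⁻ y in Ici (0 : Fin (n + 1) → ℝ), f (x + ∑ i, y i) =
        ∫⁻ s in Ioi 0, ENNReal.ofReal (s ^ n / n !) * f (x + s) :=
      ih (hf.comp (measurable_const_add x))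
    simp_rw [Fin.sum_cons, inner]
    rw [lintegral_Ioi_lintegral_Ioi_mul_comp_add (by fun_prop) hf]
    refine setLIntegral_congr_fun measurableSet_Ioi fun u hu => ?_
    rw [lintegral_Ioo_pow_div_factorial n (le_of_lt hu)]

theorem integral_Ici_zero_comp_sum (n : ℕ) {g : ℝ → ℝ} (hg : Measurable g) (hg0 : 0 ≤ g) :
    ∫ w in Ici (0 : Fin (n + 1) → ℝ), g (∑ i, w i) = ∫ s in Ioi 0, s ^ n / n ! * g s := by
  rw [integral_eq_lintegral_of_nonneg_ae (f := fun w : Fin (n + 1) → ℝ => g (∑ i, w i))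
      (ae_of_all _ fun w => hg0 _) (hg.comp (by fun_prop)).aestronglyMeasurable,
    integral_eq_lintegral_of_nonneg_ae (ae_restrict_of_forall_mem measurableSet_Ioi
      fun s hs => mul_nonneg (by have := (mem_Ioi.1 hs).le; positivity) (hg0 s)) (by fun_prop),
    lintegral_Ici_zero_comp_sum n hg.ennreal_ofReal]
  congr 1
  refine setLIntegral_congr_fun measurableSet_Ioi fun s hs => ?_
  rw [ENNReal.ofReal_mul (by have := (mem_Ioi.1 hs).le; positivity)]

theorem integral_orthant_sum_ge_comp_sum (n : ℕ) {g : ℝ → ℝ} (hg : Measurable g) (hg0 : 0 ≤ g)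
    {R : ℝ} (hR : 0 ≤ R) :
    ∫ w in {w : Fin (n + 1) → ℝ | (∀ i, 0 ≤ w i) ∧ R ≤ ∑ i, w i}, g (∑ i, w i) =
      ∫ s in Ioi R, s ^ n / n ! * g s := by
  have hsum : Measurable fun w : Fin (n + 1) → ℝ => ∑ i, w i := by fun_prop
  have hset : {w : Fin (n + 1) → ℝ | (∀ i, 0 ≤ w i) ∧ R ≤ ∑ i, w i} =
      (fun w => ∑ i, w i) ⁻¹' Ici R ∩ Ici 0 := by
    ext w
    simp [Pi.le_def, and_comm]
  calc _ = ∫ w in Ici (0 : Fin (n + 1) → ℝ), (Ici R).indicator g (∑ i, w i) := by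
        rw [hset, ← Measure.restrict_restrict (measurableSet_Ici.preimage hsum),
          ← integral_indicator (measurableSet_Ici.preimage hsum)]
        rfl
    _ = ∫ s in Ioi 0, s ^ n / n ! * (Ici R).indicator g s :=
        integral_Ici_zero_comp_sum n (hg.indicator measurableSet_Ici)
          (indicator_nonneg fun s _ => hg0 s)
    _ = ∫ s in Ioi R, s ^ n / n ! * g s := by
        have hind (s : ℝ) : s ^ n / n ! * (Ici R).indicator g s =
            (Ici R).indicator (fun s => s ^ n / n ! * g s) s := by
          rw [indicator_mul_right]
        simp_rw [hind]
        rw [← integral_Ici_eq_integral_Ioi, integral_indicator measurableSet_Ici,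
          Measure.restrict_restrict measurableSet_Ici, inter_eq_left.2 (Ici_subset_Ici.2 hR),
          integral_Ici_eq_integral_Ioi]

/-- Gaussian integral over the exterior of the simplex in the positive octant:
`∫_{w ≥ 0, ∑ w_i ≥ R} (2πσ²)^{-d/2} exp(-(∑ w_i - R)²/(2dσ²)) dw
  = (1/(2 (2πσ²)^{d/2} (d-1)!)) ∑_{i=0}^{d-1} C(d-1,i) R^{d-1-i} (σ√(2d))^{i+1} Γ((i+1)/2)`. -/
theorem gaussian_exterior_simplex_integral
    (d : ℕ) (hd : 1 ≤ d) (σ R : ℝ) (hσ : 0 < σ) (hR : 0 < R) :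
    (∫ w in {w : Fin d → ℝ | (∀ i, 0 ≤ w i) ∧ R ≤ ∑ i, w i},
        (2 * Real.pi * σ ^ 2) ^ (-(d : ℝ) / 2) *
          Real.exp (-((∑ i, w i) - R) ^ 2 / (2 * d * σ ^ 2)))
    = (1 / (2 * (2 * Real.pi * σ ^ 2) ^ ((d : ℝ) / 2) * ((d - 1).factorial : ℝ))) *
        ∑ i ∈ Finset.range d,
          ((d - 1).choose i : ℝ) * R ^ (d - 1 - i) *
            (σ * Real.sqrt (2 * d)) ^ (i + 1) * Real.Gamma (((i : ℝ) + 1) / 2) := by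
  obtain ⟨n, rfl⟩ : ∃ n, d = n + 1 := ⟨d - 1, by omega⟩
  set a := σ * √(2 * ((n + 1 : ℕ) : ℝ))
  have ha : 0 < a := by positivity
  have ha2 : 2 * ((n + 1 : ℕ) : ℝ) * σ ^ 2 = a ^ 2 := by
    rw [mul_pow, sq_sqrt (by positivity)]
    ring
  set P := (2 * π * σ ^ 2) ^ (((n + 1 : ℕ) : ℝ) / 2)
  have hP : (2 * π * σ ^ 2) ^ (-((n + 1 : ℕ) : ℝ) / 2) = P⁻¹ := by
    rw [neg_div, rpow_neg (by positivity)]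
  rw [hP, ha2, integral_orthant_sum_ge_comp_sum n (g := fun s => P⁻¹ * exp (-(s - R) ^ 2 / a ^ 2))
    (by fun_prop) (fun s => by positivity) hR.le]
  simp_rw [show ∀ s : ℝ, s ^ n / n ! * (P⁻¹ * exp (-(s - R) ^ 2 / a ^ 2)) =
    P⁻¹ / n ! * (s ^ n * exp (-(s - R) ^ 2 / a ^ 2)) from fun s => by ring]
  rw [integral_const_mul, integral_Ioi_pow_mul_exp_neg_sq_sub_div_sq n R ha, Finset.mul_sum,
    Finset.mul_sum, Nat.add_sub_cancel]
  refine Finset.sum_congr rfl fun i _ => ?_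
  field_simp
end
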